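/- arXiv:2411.08084 — 2 statements merged into one kernel-verified Lean document; each statement's English description precedes it below -/
import Mathlib

section
/- Let H be a complex Hilbert space with orthonormal basis {e_n}_{n≥1}, and T1, T2 the bounded operators with T1 e_n = e_{3n+1} for n odd, T1 e_n = 0 for n even, T2 e_n = e_{n/2} for n even, T2 e_n = 0 for n odd. If Q ∈ B(H) is an orthogonal projection lying in the commutant C*(T1,T2)' (i.e. Q commutes with T1 and T2), then Q e_1 = 0 or Q e_1 = e_1. -/
/-- The Collatz map on positive integers: `3n+1` for odd `n`, `n/2` for even `n`. -/
def collatz (n : ℕ+) : ℕ+ :=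
  if h : (n : ℕ) % 2 = 1 then 3 * n + 1
  else ⟨(n : ℕ) / 2, by
    have h2 : 0 < n.1 := n.2
    have h3 : ¬ n.1 % 2 = 1 := h
    show 0 < n.1 / 2
    omega⟩

/-- The forward orbit of `x` under `f`. -/
def orbit {X : Type*} (f : X → X) (x : X) : Set X := Set.range fun k => f^[k] x

/-- The orbit equivalence relation induced by `f`: `x ~ y` iff the orbits meet. -/
def orbEquiv {X : Type*} (f : X → X) (x y : X) : Prop :=
  (orbit f x ∩ orbit f y).Nonempty

/-- The C*-algebra of operators generated by a set `S` of bounded operators on a complex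
Hilbert space: the closure of the (non-unital) star subalgebra generated by `S`. -/
noncomputable def CstarGen {H : Type*} [NormedAddCommGroup H] [InnerProductSpace ℂ H]
    [CompleteSpace H] (S : Set (H →L[ℂ] H)) : Set (H →L[ℂ] H) :=
  closure (NonUnitalStarAlgebra.adjoin ℂ S : Set (H →L[ℂ] H))

/-!
The operator `S = T₂ T₂ T₁` fixes `e₁`, so it fixes `x = Q e₁` as well. Its adjoint sends `e_m` to
`e_k` when `3k + 1 = 4m` (then `k > m` as soon as `m > 1`) and to `0` when `m ≢ 1 mod 3`. Hence the
coefficients `⟪e_m, x⟫` with `m > 1` are constant along strictly increasing chains of indices, and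
square summability forces them to vanish. So `Q e₁ = c • e₁`, and idempotence leaves only
`Q e₁ = 0` or `Q e₁ = e₁`.
-/

open ContinuousLinearMap Filter
open scoped InnerProductSpace

theorem LinearMapClass.apply_eq_zero_or_eq_self_of_eq_smul {K V F : Type*} [Field K]
    [AddCommGroup V] [Module K V] [FunLike F V V] [LinearMapClass F K V V] {Q : F}
    (hQ : ∀ v, Q (Q v) = Q v) {v : V} {c : K} (hv : Q v = c • v) : Q v = 0 ∨ Q v = v := by
  have hc : (c - 1) • Q v = 0 := by
    rw [sub_smul, one_smul, ← map_smul, ← hv, hQ, sub_self]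
  rcases smul_eq_zero.mp hc with hc1 | hQv
  · right
    rw [hv, sub_eq_zero.mp hc1, one_smul]
  · exact Or.inl hQv

section HilbertBasis

variable {ι 𝕜 E : Type*} [RCLike 𝕜] [NormedAddCommGroup E] [InnerProductSpace 𝕜 E]
  (b : HilbertBasis ι 𝕜 E)

theorem HilbertBasis.ext_inner {v w : E} (h : ∀ i, ⟪b i, v⟫_𝕜 = ⟪b i, w⟫_𝕜) :
    v = w :=
  b.repr.injective <| lp.ext <| funext fun i => by simp only [b.repr_apply_apply, h]

theorem HilbertBasis.finite_setOf_repr_eq (x : E) {a : 𝕜} (ha : a ≠ 0) :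
    {i | b.repr x i = a}.Finite := by
  have hnorm : Tendsto (fun i => ‖b.repr x i‖) cofinite (nhds 0) := by
    simpa only [norm_smul, b.orthonormal.1, mul_one, norm_zero]
      using (b.hasSum_repr x).summable.tendsto_cofinite_zero.norm
  exact (eventually_cofinite.mp (hnorm.eventually_lt_const (norm_pos_iff.mpr ha))).subset
    fun i (hi : b.repr x i = a) => (hi ▸ lt_irrefl _ : ¬‖b.repr x i‖ < ‖a‖)

end HilbertBasis

section PartialMap

variable {ι 𝕜 E : Type*} [RCLike 𝕜] [NormedAddCommGroup E] [InnerProductSpace 𝕜 E]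
  [CompleteSpace E] (b : HilbertBasis ι 𝕜 E) {T : E →L[𝕜] E} {p : ι → Prop} [DecidablePred p]
  {σ : ι → ι}

theorem HilbertBasis.adjoint_apply_eq_of_apply_eq_ite
    (hT : ∀ n, T (b n) = if p n then b (σ n) else 0) {m k : ι} (hk : p k) (hσk : σ k = m)
    (hinj : ∀ n, p n → σ n = m → n = k) : adjoint T (b m) = b k := by
  classical
  have hb := orthonormal_iff_ite.mp b.orthonormal
  refine b.ext_inner fun n => ?_
  rw [adjoint_inner_right, hT, hb]
  by_cases hn : n = k
  · rw [hn, if_pos hk, hσk, hb, if_pos rfl, if_pos rfl]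
  · rw [if_neg hn]
    split_ifs with hpn
    · rw [hb, if_neg (mt (hinj n hpn) hn)]
    · exact inner_zero_left _

theorem HilbertBasis.adjoint_apply_eq_zero_of_apply_eq_ite
    (hT : ∀ n, T (b n) = if p n then b (σ n) else 0) {m : ι} (hm : ∀ n, p n → σ n ≠ m) :
    adjoint T (b m) = 0 := by
  refine b.ext_inner fun n => ?_
  rw [adjoint_inner_right, hT, inner_zero_right]
  split_ifs with hpn
  · exact b.orthonormal.inner_eq_zero (hm n hpn)
  · exact inner_zero_left _

end PartialMap

theorem coe_collatz_of_even {n : ℕ+} (hn : (n : ℕ) % 2 = 0) : (collatz n : ℕ) = n / 2 :=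
  congrArg PNat.val (dif_neg (by omega : ¬(n : ℕ) % 2 = 1))

section CollatzOperators

variable {H : Type*} [NormedAddCommGroup H] [InnerProductSpace ℂ H] {b : HilbertBasis ℕ+ ℂ H}
  {T1 T2 : H →L[ℂ] H}

theorem T2_T2_T1_apply_basis_one
    (hT1 : ∀ n : ℕ+, T1 (b n) = if (n : ℕ) % 2 = 1 then b (3 * n + 1) else 0)
    (hT2 : ∀ n : ℕ+, T2 (b n) = if (n : ℕ) % 2 = 0 then b (collatz n) else 0) :
    T2 (T2 (T1 (b 1))) = b 1 := by
  rw [hT1, if_pos (by decide), hT2, if_pos (by decide), hT2, if_pos (by decide)]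
  exact congrArg b (by decide)

variable [CompleteSpace H]

theorem adjoint_T2_apply_basis
    (hT2 : ∀ n : ℕ+, T2 (b n) = if (n : ℕ) % 2 = 0 then b (collatz n) else 0) (m : ℕ+) :
    adjoint T2 (b m) = b (2 * m) := by
  refine b.adjoint_apply_eq_of_apply_eq_ite hT2 (by simp) (PNat.eq ?_) fun n hn h => PNat.eq ?_
  · rw [coe_collatz_of_even (by simp)]
    simp
  · have hnm := coe_collatz_of_even hn
    rw [h] at hnm
    push_cast
    omega

theorem adjoint_T1_apply_basis
    (hT1 : ∀ n : ℕ+, T1 (b n) = if (n : ℕ) % 2 = 1 then b (3 * n + 1) else 0) {k : ℕ+}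
    (hk : (k : ℕ) % 2 = 1) : adjoint T1 (b (3 * k + 1)) = b k :=
  b.adjoint_apply_eq_of_apply_eq_ite hT1 hk rfl fun n _ h => by
    have hval := congrArg PNat.val h
    push_cast at hval
    exact PNat.eq (by omega)

theorem adjoint_T1_apply_basis_eq_zero
    (hT1 : ∀ n : ℕ+, T1 (b n) = if (n : ℕ) % 2 = 1 then b (3 * n + 1) else 0) {m : ℕ+}
    (hm : (m : ℕ) % 3 ≠ 1) : adjoint T1 (b m) = 0 :=
  b.adjoint_apply_eq_zero_of_apply_eq_ite hT1 fun n _ h => hm (by rw [← h]; push_cast; omega)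

theorem inner_basis_eq_inner_adjoint_T1_of_fixed
    (hT2 : ∀ n : ℕ+, T2 (b n) = if (n : ℕ) % 2 = 0 then b (collatz n) else 0) {x : H}
    (hx : T2 (T2 (T1 x)) = x) (m : ℕ+) : ⟪b m, x⟫_ℂ = ⟪adjoint T1 (b (4 * m)), x⟫_ℂ := by
  conv_lhs => rw [← hx]
  rw [← adjoint_inner_left, adjoint_T2_apply_basis hT2, ← adjoint_inner_left,
    adjoint_T2_apply_basis hT2, ← mul_assoc, ← adjoint_inner_left]
  rfl

theorem exists_lt_inner_basis_eq_of_fixed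
    (hT1 : ∀ n : ℕ+, T1 (b n) = if (n : ℕ) % 2 = 1 then b (3 * n + 1) else 0)
    (hT2 : ∀ n : ℕ+, T2 (b n) = if (n : ℕ) % 2 = 0 then b (collatz n) else 0) {x : H}
    (hx : T2 (T2 (T1 x)) = x) {m : ℕ+} (hm : m ≠ 1) (hxm : ⟪b m, x⟫_ℂ ≠ 0) :
    ∃ k, m < k ∧ ⟪b k, x⟫_ℂ = ⟪b m, x⟫_ℂ := by
  have hm3 : (m : ℕ) % 3 = 1 := by
    by_contra hm3
    rw [inner_basis_eq_inner_adjoint_T1_of_fixed hT2 hx,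
      adjoint_T1_apply_basis_eq_zero hT1 (by push_cast; omega), inner_zero_left] at hxm
    exact hxm rfl
  have hm1 : (m : ℕ) ≠ 1 := mt PNat.coe_eq_one_iff.mp hm
  obtain ⟨k, hk⟩ : ∃ k : ℕ+, (k : ℕ) = (4 * m - 1) / 3 := ⟨⟨_, by omega⟩, rfl⟩
  have h4m : 4 * m = 3 * k + 1 := PNat.eq (by push_cast; omega)
  refine ⟨k, PNat.coe_lt_coe _ _ |>.mp (by omega), ?_⟩
  rw [inner_basis_eq_inner_adjoint_T1_of_fixed hT2 hx m, h4m,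
    adjoint_T1_apply_basis hT1 (by omega)]

theorem inner_basis_eq_zero_of_fixed
    (hT1 : ∀ n : ℕ+, T1 (b n) = if (n : ℕ) % 2 = 1 then b (3 * n + 1) else 0)
    (hT2 : ∀ n : ℕ+, T2 (b n) = if (n : ℕ) % 2 = 0 then b (collatz n) else 0) {x : H}
    (hx : T2 (T2 (T1 x)) = x) {m : ℕ+} (hm : m ≠ 1) : ⟪b m, x⟫_ℂ = 0 := by
  by_contra hxm
  have hs : {i | i ≠ 1 ∧ ⟪b i, x⟫_ℂ = ⟪b m, x⟫_ℂ}.Finite :=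
    (b.finite_setOf_repr_eq x hxm).subset fun i hi => (b.repr_apply_apply x i).trans hi.2
  obtain ⟨i, ⟨hi1, hix⟩, hmax⟩ := hs.exists_maximal ⟨m, hm, rfl⟩
  obtain ⟨k, hik, hkx⟩ := exists_lt_inner_basis_eq_of_fixed hT1 hT2 hx hi1 (hix ▸ hxm)
  exact hik.not_ge (hmax ⟨(one_le.trans_lt hik).ne', hkx.trans hix⟩ hik.le)

theorem eq_smul_basis_one_of_fixed
    (hT1 : ∀ n : ℕ+, T1 (b n) = if (n : ℕ) % 2 = 1 then b (3 * n + 1) else 0)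
    (hT2 : ∀ n : ℕ+, T2 (b n) = if (n : ℕ) % 2 = 0 then b (collatz n) else 0) {x : H}
    (hx : T2 (T2 (T1 x)) = x) : x = ⟪b 1, x⟫_ℂ • b 1 := by
  refine b.ext_inner fun i => ?_
  rw [inner_smul_right]
  rcases eq_or_ne i 1 with rfl | hi
  · rw [inner_self_eq_norm_sq_to_K, b.orthonormal.1 1]
    simp
  · rw [inner_basis_eq_zero_of_fixed hT1 hT2 hx hi, b.orthonormal.inner_eq_zero hi, mul_zero]

end CollatzOperators

theorem projection_commutant_pair_general {H : Type*} [NormedAddCommGroup H] [InnerProductSpace ℂ H]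
    [CompleteSpace H] (b : HilbertBasis ℕ+ ℂ H)
    (T1 T2 : H →L[ℂ] H)
    (hT1 : ∀ n : ℕ+, T1 (b n) = if (n : ℕ) % 2 = 1 then b (3 * n + 1) else 0)
    (hT2 : ∀ n : ℕ+, T2 (b n) = if (n : ℕ) % 2 = 0 then b (collatz n) else 0)
    (Q : H →L[ℂ] H) (hQidem : Q * Q = Q)
    (hQcomm : ∀ A ∈ CstarGen {T1, T2}, Q * A = A * Q) :
    Q (b 1) = 0 ∨ Q (b 1) = b 1 := by
  have hQT : ∀ T ∈ ({T1, T2} : Set (H →L[ℂ] H)), ∀ z, Q (T z) = T (Q z) := fun T hT z =>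
    congr($(hQcomm T (subset_closure (NonUnitalStarAlgebra.subset_adjoin ℂ _ hT))) z)
  have hfix : T2 (T2 (T1 (Q (b 1)))) = Q (b 1) := by
    rw [← hQT T1 (by simp), ← hQT T2 (by simp), ← hQT T2 (by simp),
      T2_T2_T1_apply_basis_one hT1 hT2]
  exact LinearMapClass.apply_eq_zero_or_eq_self_of_eq_smul (DFunLike.congr_fun hQidem)
    (eq_smul_basis_one_of_fixed hT1 hT2 hfix)

/-- Any orthogonal projection in the commutant of `C*(T₁,T₂)` maps `e₁` to `0` or `e₁`. -/
theorem projection_commutant_pair {H : Type*} [NormedAddCommGroup H] [InnerProductSpace ℂ H]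
    [CompleteSpace H] (b : HilbertBasis ℕ+ ℂ H)
    (T1 T2 : H →L[ℂ] H)
    (hT1 : ∀ n : ℕ+, T1 (b n) = if (n : ℕ) % 2 = 1 then b (3 * n + 1) else 0)
    (hT2 : ∀ n : ℕ+, T2 (b n) = if (n : ℕ) % 2 = 0 then b (collatz n) else 0)
    (Q : H →L[ℂ] H) (hQidem : Q * Q = Q) (hQsa : ContinuousLinearMap.adjoint Q = Q)
    (hQcomm : ∀ A ∈ CstarGen {T1, T2}, Q * A = A * Q) :
    Q (b 1) = 0 ∨ Q (b 1) = b 1 :=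
  projection_commutant_pair_general b T1 T2 hT1 hT2 Q hQidem hQcomm
end

section
/- Let P be the first-return map of the Collatz map on N1 ∪ N2, H a complex Hilbert space with orthonormal basis {e_n}_{n ∈ N1∪N2}, T1, T2 the bounded operators with T1 e_n = e_{P(n)} for n ∈ N1, T1 e_n = 0 for n ∈ N2, T2 e_n = e_{P(n)} for n ∈ N2, T2 e_n = 0 for n ∈ N1, and S1 = T1*T2*, S2 = T2*. Then the following are equivalent: (i) there exists n ∈ N1 ∪ N2 such that e_n is a cyclic vector for C*(S1,S2); (ii) the Collatz conjecture holds. -/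
/-- `N₁ = {n : n ≡ 1, 5 (mod 6)}`. -/
def N1 : Set ℕ+ := {n : ℕ+ | (n : ℕ) % 6 = 1 ∨ (n : ℕ) % 6 = 5}

/-- `N₂ = {n : n ≡ 4, 16 (mod 18)}`. -/
def N2 : Set ℕ+ := {n : ℕ+ | (n : ℕ) % 18 = 4 ∨ (n : ℕ) % 18 = 16}

/-- `y` is the first return of `x` to `S` under iteration of `f`: for some `k ≥ 1`,
`y = f^[k] x ∈ S` and no earlier positive iterate of `x` lies in `S`. -/
def IsFirstReturn {X : Type*} (f : X → X) (S : Set X) (x y : X) : Prop :=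
  ∃ k : ℕ, 0 < k ∧ f^[k] x ∈ S ∧ y = f^[k] x ∧ ∀ j : ℕ, 0 < j → j < k → f^[j] x ∉ S

/-!
On `N1` the first-return map `P` is `n ↦ 3n + 1`, and on `N2` it is a pure halving
`n ↦ n / 2 ^ k`; both are injective, so `T1` and `T2` are partial shifts of the basis whose
adjoints shift back along `P`. Consequently, for each `n`, the closed span of the `e_z` with `z` in
the grand orbit of `n` under `P` is invariant under `S1`, `S2` and their adjoints, hence contains
`C*(S1, S2) e_n`. If `e_n` is cyclic, every `z` is therefore in the grand orbit of `n`, in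
particular in that of `1`, whose `P`-orbit stays on the Collatz cycle `1 → 4 → 2 → 1`; since every
Collatz orbit meets `N1`, every Collatz orbit reaches `1`. Conversely, if every Collatz orbit
reaches `1`, then so does every `P`-orbit, and `e_m` is recovered from `e_1` by undoing the steps
of `P` from `m` to `1`: with `S2 = T2*` at points of `N2` and with `S1 S2* = T1* T2* T2` at points
of `N1`.
-/

open Function Set

section Orbit

variable {X : Type*}

lemma iterate_mem_orbit (f : X → X) (x : X) (k : ℕ) : f^[k] x ∈ orbit f x := ⟨k, rfl⟩

lemma orbEquiv_refl (f : X → X) (x : X) : orbEquiv f x x := ⟨x, ⟨0, rfl⟩, ⟨0, rfl⟩⟩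

variable {f : X → X} {x y z : X}

lemma orbit_trans (hy : y ∈ orbit f x) (hz : z ∈ orbit f y) : z ∈ orbit f x := by
  obtain ⟨k, rfl⟩ := hy
  obtain ⟨l, rfl⟩ := hz
  exact ⟨l + k, iterate_add_apply f l k x⟩

lemma mem_orbit_of_isPeriodicPt {p : ℕ} (hx : IsPeriodicPt f p x) (hp : 0 < p)
    (hy : y ∈ orbit f x) : x ∈ orbit f y := by
  obtain ⟨k, rfl⟩ := hy
  refine ⟨p * k - k, show f^[p * k - k] (f^[k] x) = x from ?_⟩
  rw [← iterate_add_apply, Nat.sub_add_cancel (Nat.le_mul_of_pos_left k hp)]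
  exact hx.mul_const k

lemma orbEquiv_iff : orbEquiv f x y ↔ ∃ a b, f^[a] x = f^[b] y := by
  constructor
  · rintro ⟨_, ⟨a, rfl⟩, ⟨b, hb⟩⟩
    exact ⟨a, b, hb.symm⟩
  · rintro ⟨a, b, h⟩
    exact ⟨f^[a] x, ⟨a, rfl⟩, ⟨b, h.symm⟩⟩

lemma orbEquiv.symm (h : orbEquiv f x y) : orbEquiv f y x := by
  rwa [orbEquiv, inter_comm]

lemma orbEquiv.trans (hxy : orbEquiv f x y) (hyz : orbEquiv f y z) : orbEquiv f x z := by
  obtain ⟨a, b, hab⟩ := orbEquiv_iff.1 hxy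
  obtain ⟨c, d, hcd⟩ := orbEquiv_iff.1 hyz
  refine orbEquiv_iff.2 ⟨c + a, b + d, ?_⟩
  calc f^[c + a] x = f^[c] (f^[b] y) := by rw [iterate_add_apply, hab]
    _ = f^[b] (f^[c] y) := by rw [← iterate_add_apply, Nat.add_comm, iterate_add_apply]
    _ = f^[b + d] z := by rw [hcd, iterate_add_apply]

lemma orbEquiv_apply_left_iff : orbEquiv f (f x) y ↔ orbEquiv f x y := by
  simp only [orbEquiv_iff]
  constructor
  · rintro ⟨a, b, h⟩
    exact ⟨a + 1, b, by rwa [iterate_succ_apply]⟩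
  · rintro ⟨a, b, h⟩
    exact ⟨a, b + 1, by rw [← iterate_succ_apply, iterate_succ_apply', h, iterate_succ_apply']⟩

end Orbit

section FirstReturn

variable {X : Type*} {f : X → X} {S : Set X}

lemma IsFirstReturn.unique {x y y' : X} (h : IsFirstReturn f S x y)
    (h' : IsFirstReturn f S x y') : y = y' := by
  obtain ⟨k, hk, hmem, rfl, hmin⟩ := h
  obtain ⟨k', hk', hmem', rfl, hmin'⟩ := h'
  rcases lt_trichotomy k k' with hlt | rfl | hlt
  · exact absurd hmem (hmin' k hk hlt)
  · rfl
  · exact absurd hmem' (hmin k' hk' hlt)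

lemma IsFirstReturn.eq_apply {x y : X} (h : IsFirstReturn f S x y) (hx : f x ∈ S) : y = f x :=
  h.unique ⟨1, one_pos, hx, rfl, fun _ hj hj1 => absurd hj1 (by omega)⟩

variable {P : S → S} (hP : ∀ x : S, IsFirstReturn f S x (P x))
include hP

lemma coe_iterate_mem_orbit_of_isFirstReturn (x : S) (a : ℕ) : (P^[a] x : X) ∈ orbit f x := by
  induction a with
  | zero => exact iterate_mem_orbit f x 0
  | succ a ih =>
    obtain ⟨k, -, -, hPa, -⟩ := hP (P^[a] x)
    rw [iterate_succ_apply', hPa]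
    exact orbit_trans ih (iterate_mem_orbit f _ k)

lemma exists_coe_iterate_eq_of_isFirstReturn (x : S) {k : ℕ} (hk : f^[k] x ∈ S) :
    ∃ a, (P^[a] x : X) = f^[k] x := by
  induction k using Nat.strong_induction_on generalizing x with
  | _ k ih =>
    rcases Nat.eq_zero_or_pos k with rfl | hpos
    · exact ⟨0, rfl⟩
    obtain ⟨k₁, hk₁, -, hPx, hmin⟩ := hP x
    have hle : k₁ ≤ k := not_lt.1 fun hlt => hmin k hpos hlt hk
    have hsplit : f^[k] x = f^[k - k₁] (P x) := by
      rw [hPx, ← iterate_add_apply, Nat.sub_add_cancel hle]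
    obtain ⟨a, ha⟩ := ih (k - k₁) (by omega) (P x) (hsplit ▸ hk)
    exact ⟨a + 1, by rw [iterate_succ_apply, ha, hsplit]⟩

end FirstReturn

lemma collatz_of_odd {n : ℕ+} (h : (n : ℕ) % 2 = 1) : (collatz n : ℕ) = 3 * n + 1 := by
  simp [collatz, h]

lemma collatz_of_even {n : ℕ+} (h : (n : ℕ) % 2 = 0) : (collatz n : ℕ) = n / 2 := by
  simp [collatz, h]

lemma isPeriodicPt_collatz_one : IsPeriodicPt collatz 3 1 := by decide

lemma mem_N1_iff {n : ℕ+} : n ∈ N1 ↔ (n : ℕ) % 2 = 1 ∧ (n : ℕ) % 3 ≠ 0 := by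
  simp only [N1, mem_ofPred_eq]
  omega

lemma mod_six_of_mem_N2 {n : ℕ+} (h : n ∈ N2) : (n : ℕ) % 6 = 4 := by
  rcases h with h | h <;> omega

lemma collatz_mem_N2 {n : ℕ+} (h : n ∈ N1) : collatz n ∈ N2 := by
  have hv := collatz_of_odd (mem_N1_iff.1 h).1
  rcases h with h | h
  · exact Or.inl (by omega)
  · exact Or.inr (by omega)

lemma collatz_injOn_N1 : InjOn collatz N1 := fun x hx w hw h => by
  have hx' := collatz_of_odd (mem_N1_iff.1 hx).1
  have hw' := collatz_of_odd (mem_N1_iff.1 hw).1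
  rw [h] at hx'
  exact PNat.coe_injective (by omega)

lemma exists_iterate_collatz_mem_N1_of_mod_three_ne_zero (n : ℕ+) (h3 : (n : ℕ) % 3 ≠ 0) :
    ∃ k, collatz^[k] n ∈ N1 := by
  induction n using WellFoundedLT.induction with
  | _ n ih =>
    rcases Nat.mod_two_eq_zero_or_one n with he | ho
    · have hv := collatz_of_even he
      obtain ⟨k, hk⟩ := ih (collatz n) (by rw [← PNat.coe_lt_coe]; omega) (by omega)
      exact ⟨k + 1, by rwa [iterate_succ_apply]⟩
    · exact ⟨0, mem_N1_iff.2 ⟨ho, h3⟩⟩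

lemma exists_iterate_collatz_mem_N1 (n : ℕ+) : ∃ k, collatz^[k] n ∈ N1 := by
  induction n using WellFoundedLT.induction with
  | _ n ih =>
    rcases Nat.mod_two_eq_zero_or_one n with he | ho
    · have hv := collatz_of_even he
      have hn := n.pos
      obtain ⟨k, hk⟩ := ih (collatz n) (by rw [← PNat.coe_lt_coe]; omega)
      exact ⟨k + 1, by rwa [iterate_succ_apply]⟩
    · have hv := collatz_of_odd ho
      obtain ⟨k, hk⟩ := exists_iterate_collatz_mem_N1_of_mod_three_ne_zero (collatz n) (by omega)
      exact ⟨k + 1, by rwa [iterate_succ_apply]⟩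

lemma iterate_collatz_mul_two_pow {x : ℕ+} (hx : x ∈ N2) {k : ℕ}
    (hk : ∀ j, 0 < j → j < k → collatz^[j] x ∉ N1) :
    ∀ j ≤ k, (collatz^[j] x : ℕ) * 2 ^ j = x := by
  have hx6 := mod_six_of_mem_N2 hx
  intro j hj
  induction j with
  | zero => simp
  | succ j ih =>
    set c := collatz^[j] x with hc_def
    have hc : (c : ℕ) * 2 ^ j = x := ih (by omega)
    have hc3 : (c : ℕ) % 3 ≠ 0 := fun h => by
      have := hc ▸ (Nat.dvd_of_mod_eq_zero h).mul_right (2 ^ j)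
      omega
    have hc2 : (c : ℕ) % 2 = 0 := by
      by_contra hodd
      rcases Nat.eq_zero_or_pos j with rfl | hj0
      · simp only [c, iterate_zero_apply] at hodd
        omega
      · exact hk j hj0 (by omega) (mem_N1_iff (n := c).2 ⟨by omega, hc3⟩)
    calc (collatz^[j + 1] x : ℕ) * 2 ^ (j + 1) = ((c : ℕ) / 2 * 2) * 2 ^ j := by
          rw [iterate_succ_apply', ← hc_def, collatz_of_even hc2, pow_succ]; ring
      _ = x := by rw [Nat.div_mul_cancel (Nat.dvd_of_mod_eq_zero hc2), hc]

lemma IsFirstReturn.eq_collatz_of_mem_N1 {x y : ℕ+} (h : IsFirstReturn collatz (N1 ∪ N2) x y)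
    (hx : x ∈ N1) : y = collatz x :=
  h.eq_apply (Or.inr (collatz_mem_N2 hx))

lemma IsFirstReturn.eq_of_mem_N1 {x w y : ℕ+} (hx : x ∈ N1) (hw : w ∈ N1)
    (hxy : IsFirstReturn collatz (N1 ∪ N2) x y) (hwy : IsFirstReturn collatz (N1 ∪ N2) w y) :
    x = w :=
  collatz_injOn_N1 hx hw ((hxy.eq_collatz_of_mem_N1 hx).symm.trans (hwy.eq_collatz_of_mem_N1 hw))

lemma IsFirstReturn.eq_of_mem_N2 {x w y : ℕ+} (hx : x ∈ N2) (hw : w ∈ N2)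
    (hxy : IsFirstReturn collatz (N1 ∪ N2) x y) (hwy : IsFirstReturn collatz (N1 ∪ N2) w y) :
    x = w := by
  obtain ⟨k, hk, -, rfl, hmin⟩ := hxy
  obtain ⟨k', hk', -, heq, hmin'⟩ := hwy
  wlog hle : k ≤ k' generalizing x w k k'
  · exact (this hw hx k' hk' hmin' k hk heq.symm hmin (by omega)).symm
  have hx' := iterate_collatz_mul_two_pow hx (fun j h1 h2 h => hmin j h1 h2 (Or.inl h)) k le_rfl
  have hw' := iterate_collatz_mul_two_pow hw (fun j h1 h2 h => hmin' j h1 h2 (Or.inl h))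
  -- `x = y * 2 ^ k` and `w = y * 2 ^ k'`, so halving `w` for `k' - k` steps reaches `x ∈ N1 ∪ N2`
  have hwx : collatz^[k' - k] w = x := by
    have hpow : (2 : ℕ) ^ k' = 2 ^ k * 2 ^ (k' - k) := by rw [← pow_add, Nat.add_sub_cancel' hle]
    apply PNat.coe_injective
    refine Nat.eq_of_mul_eq_mul_right (pow_pos two_pos (k' - k)) ?_
    rw [hw' (k' - k) (Nat.sub_le k' k), ← hw' k' le_rfl, ← heq, hpow, ← mul_assoc, hx']
  rcases Nat.eq_zero_or_pos (k' - k) with h0 | hpos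
  · rw [← hwx, h0, iterate_zero_apply]
  · exact absurd (hwx ▸ Or.inr hx) (hmin' (k' - k) hpos (by omega))

open scoped InnerProductSpace

section HilbertBasis

variable {ι 𝕜 H : Type*} [RCLike 𝕜] [NormedAddCommGroup H] [InnerProductSpace 𝕜 H]

lemma HilbertBasis.ext_inner_left (b : HilbertBasis ι 𝕜 H) {u v : H}
    (h : ∀ i, ⟪b i, u⟫_𝕜 = ⟪b i, v⟫_𝕜) : u = v :=
  b.repr.injective (lp.ext (funext fun i => by simp only [b.repr_apply_apply, h]))

lemma HilbertBasis.mem_of_mem_topologicalClosure_span (b : HilbertBasis ι 𝕜 H) {R : Set ι}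
    {i : ι} (h : b i ∈ (Submodule.span 𝕜 (b '' R)).topologicalClosure) : i ∈ R := by
  by_contra hi
  have hle : (Submodule.span 𝕜 (b '' R)).topologicalClosure ≤
      (innerSL 𝕜 (b i)).ker := by
    refine Submodule.topologicalClosure_minimal _ (Submodule.span_le.2 ?_)
      (ContinuousLinearMap.isClosed_ker _)
    rintro _ ⟨j, hj, rfl⟩
    exact b.orthonormal.inner_eq_zero fun hij => hi (hij ▸ hj)
  have h0 : ⟪b i, b i⟫_𝕜 = 0 := hle h
  rw [inner_self_eq_zero] at h0
  simpa [h0] using b.orthonormal.norm_eq_one i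

lemma HilbertBasis.dense_of_range_subset (b : HilbertBasis ι 𝕜 H) {M : Submodule 𝕜 H}
    (h : range b ⊆ M) : Dense (M : Set H) := by
  rw [Submodule.dense_iff_topologicalClosure_eq_top, eq_top_iff, ← b.dense_span]
  exact Submodule.topologicalClosure_mono (Submodule.span_le.2 h)

end HilbertBasis

lemma Submodule.mapsTo_topologicalClosure_span {𝕜 E : Type*} [NormedField 𝕜]
    [NormedAddCommGroup E] [NormedSpace 𝕜 E] {s : Set E} {A : E →L[𝕜] E}
    (h : MapsTo A s (span 𝕜 s).topologicalClosure) :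
    MapsTo A (span 𝕜 s).topologicalClosure (span 𝕜 s).topologicalClosure :=
  Submodule.topologicalClosure_minimal (t := (span 𝕜 s).topologicalClosure.comap (A : E →ₗ[𝕜] E))
    _ (span_le.2 h) ((isClosed_topologicalClosure _).preimage A.continuous)

section PartialShift

variable {ι 𝕜 H : Type*} [RCLike 𝕜] [NormedAddCommGroup H] [InnerProductSpace 𝕜 H]

def IsPartialShift (b : HilbertBasis ι 𝕜 H) (D : Set ι) (g : ι → ι) (T : H →L[𝕜] H) : Prop :=
  (∀ i ∈ D, T (b i) = b (g i)) ∧ ∀ i ∉ D, T (b i) = 0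

variable {b : HilbertBasis ι 𝕜 H} {D : Set ι} {g : ι → ι} {T : H →L[𝕜] H} {R : Set ι}

namespace IsPartialShift

lemma mapsTo (hT : IsPartialShift b D g T) (hR : ∀ i ∈ R, i ∈ D → g i ∈ R) :
    MapsTo T (Submodule.span 𝕜 (b '' R)).topologicalClosure
      (Submodule.span 𝕜 (b '' R)).topologicalClosure := by
  refine Submodule.mapsTo_topologicalClosure_span ?_
  rintro _ ⟨i, hi, rfl⟩
  by_cases hiD : i ∈ D
  · rw [hT.1 i hiD]
    exact Submodule.le_topologicalClosure _ (Submodule.subset_span ⟨g i, hR i hi hiD, rfl⟩)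
  · rw [hT.2 i hiD]
    exact zero_mem _

variable [CompleteSpace H]

lemma adjoint_apply (hT : IsPartialShift b D g T) (hg : InjOn g D) {i : ι} (hi : i ∈ D) :
    T.adjoint (b (g i)) = b i := by
  classical
  refine b.ext_inner_left fun w => ?_
  rw [ContinuousLinearMap.adjoint_inner_right]
  by_cases hw : w ∈ D
  · simp only [hT.1 w hw, orthonormal_iff_ite.1 b.orthonormal]
    exact if_congr ⟨fun h => hg hw hi h, congrArg g⟩ rfl rfl
  · rw [hT.2 w hw, inner_zero_left, b.orthonormal.inner_eq_zero (ne_of_mem_of_not_mem hi hw).symm]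

lemma adjoint_apply_eq_zero (hT : IsPartialShift b D g T) {j : ι} (hj : j ∉ g '' D) :
    T.adjoint (b j) = 0 := by
  refine b.ext_inner_left fun w => ?_
  rw [ContinuousLinearMap.adjoint_inner_right, inner_zero_right]
  by_cases hw : w ∈ D
  · rw [hT.1 w hw, b.orthonormal.inner_eq_zero fun h => hj ⟨w, hw, h⟩]
  · rw [hT.2 w hw, inner_zero_left]

lemma adjoint_mapsTo (hT : IsPartialShift b D g T) (hg : InjOn g D)
    (hR : ∀ i ∈ D, g i ∈ R → i ∈ R) :
    MapsTo T.adjoint (Submodule.span 𝕜 (b '' R)).topologicalClosure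
      (Submodule.span 𝕜 (b '' R)).topologicalClosure := by
  refine Submodule.mapsTo_topologicalClosure_span ?_
  rintro _ ⟨j, hj, rfl⟩
  by_cases hjD : j ∈ g '' D
  · obtain ⟨i, hi, rfl⟩ := hjD
    rw [hT.adjoint_apply hg hi]
    exact Submodule.le_topologicalClosure _ (Submodule.subset_span ⟨i, hR i hi hj, rfl⟩)
  · rw [hT.adjoint_apply_eq_zero hjD]
    exact zero_mem _

end IsPartialShift

end PartialShift

lemma mapsTo_of_mem_cstarGen {H : Type*} [NormedAddCommGroup H] [InnerProductSpace ℂ H]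
    [CompleteSpace H] {K : Submodule ℂ H} (hK : IsClosed (K : Set H)) {s : Set (H →L[ℂ] H)}
    (hs : ∀ A ∈ s, MapsTo A K K ∧ MapsTo ⇑(star A) K K) {A : H →L[ℂ] H} (hA : A ∈ CstarGen s) :
    MapsTo A K K := by
  have hadjoin : ∀ B ∈ NonUnitalStarAlgebra.adjoin ℂ s, MapsTo B K K ∧ MapsTo ⇑(star B) K K := by
    intro B hB
    induction hB using NonUnitalStarAlgebra.adjoin_induction with
    | mem B hB => exact hs B hB
    | add B C _ _ hB hC =>
      refine ⟨fun v hv => ?_, fun v hv => ?_⟩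
      · simpa only [add_apply, SetLike.mem_coe] using K.add_mem (hB.1 hv) (hC.1 hv)
      · simpa only [star_add, add_apply, SetLike.mem_coe] using K.add_mem (hB.2 hv) (hC.2 hv)
    | zero => simpa only [star_zero] using ⟨fun v _ => zero_mem K, fun v _ => zero_mem K⟩
    | mul B C _ _ hB hC =>
      simpa only [star_mul, FunLike.coe_mul] using ⟨hB.1.comp hC.1, hC.2.comp hB.2⟩
    | smul r B _ hB =>
      refine ⟨fun v hv => ?_, fun v hv => ?_⟩
      · simpa only [smul_apply, SetLike.mem_coe] using K.smul_mem r (hB.1 hv)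
      · simpa only [star_smul, smul_apply, SetLike.mem_coe] using K.smul_mem _ (hB.2 hv)
    | star B _ hB => exact ⟨hB.2, by simpa only [star_star] using hB.1⟩
  have hclosed : IsClosed {B : H →L[ℂ] H | MapsTo B K K} :=
    hK.setOfPred_mapsTo fun v _ => (ContinuousLinearMap.apply ℂ H v).continuous
  exact closure_minimal (fun B hB => (hadjoin B hB).1) hclosed hA

lemma one_mem_N1_union_N2 : (1 : ℕ+) ∈ N1 ∪ N2 := Or.inl (Or.inl rfl)

section CollatzFirstReturn

variable {P : ↥(N1 ∪ N2) → ↥(N1 ∪ N2)}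
  (hP : ∀ x : ↥(N1 ∪ N2), IsFirstReturn collatz (N1 ∪ N2) ↑x ↑(P x))
include hP

lemma firstReturn_mem_N2 {x : ↥(N1 ∪ N2)} (hx : (x : ℕ+) ∈ N1) : (P x : ℕ+) ∈ N2 :=
  ((hP x).eq_collatz_of_mem_N1 hx).symm ▸ collatz_mem_N2 hx

lemma injOn_firstReturn_N1 : InjOn P {x | (x : ℕ+) ∈ N1} := fun x hx w hw h =>
  Subtype.ext ((hP x).eq_of_mem_N1 hx hw (h ▸ hP w))

lemma injOn_firstReturn_N2 : InjOn P {x | (x : ℕ+) ∈ N2} := fun x hx w hw h =>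
  Subtype.ext ((hP x).eq_of_mem_N2 hx hw (h ▸ hP w))

lemma one_mem_orbit_of_orbEquiv_one {z : ↥(N1 ∪ N2)} (h : orbEquiv P z ⟨1, one_mem_N1_union_N2⟩) :
    1 ∈ orbit collatz z := by
  obtain ⟨a, c, hac⟩ := orbEquiv_iff.1 h
  have h1 := coe_iterate_mem_orbit_of_isFirstReturn hP ⟨1, one_mem_N1_union_N2⟩ c
  have h2 := mem_orbit_of_isPeriodicPt isPeriodicPt_collatz_one three_pos h1
  rw [← hac] at h2
  exact orbit_trans (coe_iterate_mem_orbit_of_isFirstReturn hP z a) h2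

end CollatzFirstReturn

section Operators

variable {H : Type*} [NormedAddCommGroup H] [InnerProductSpace ℂ H]
  {b : HilbertBasis ↥(N1 ∪ N2) ℂ H} {P : ↥(N1 ∪ N2) → ↥(N1 ∪ N2)} {T T1 T2 : H →L[ℂ] H}

lemma isPartialShift_N1 (hT : ∀ x : ↥(N1 ∪ N2), ((x : ℕ+) ∈ N1 → T (b x) = b (P x)) ∧
      ((x : ℕ+) ∈ N2 → T (b x) = 0)) : IsPartialShift b {x | (x : ℕ+) ∈ N1} P T :=
  ⟨fun x hx => (hT x).1 hx, fun x hx => (hT x).2 (x.2.resolve_left hx)⟩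

lemma isPartialShift_N2 (hT : ∀ x : ↥(N1 ∪ N2), ((x : ℕ+) ∈ N2 → T (b x) = b (P x)) ∧
      ((x : ℕ+) ∈ N1 → T (b x) = 0)) : IsPartialShift b {x | (x : ℕ+) ∈ N2} P T :=
  ⟨fun x hx => (hT x).1 hx, fun x hx => (hT x).2 (x.2.resolve_right hx)⟩

variable [CompleteSpace H] (hP : ∀ x : ↥(N1 ∪ N2), IsFirstReturn collatz (N1 ∪ N2) ↑x ↑(P x))
  (hT1 : IsPartialShift b {x | (x : ℕ+) ∈ N1} P T1)
  (hT2 : IsPartialShift b {x | (x : ℕ+) ∈ N2} P T2)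
include hP hT1 hT2

lemma exists_mem_adjoin_apply_firstReturn (z : ↥(N1 ∪ N2)) :
    ∃ B ∈ NonUnitalStarAlgebra.adjoin ℂ {T1.adjoint * T2.adjoint, T2.adjoint},
      B (b (P z)) = b z ∧ star B (b z) = b (P z) := by
  have hS2 : T2.adjoint ∈ NonUnitalStarAlgebra.adjoin ℂ {T1.adjoint * T2.adjoint, T2.adjoint} :=
    NonUnitalStarAlgebra.subset_adjoin ℂ _ (mem_insert_of_mem _ rfl)
  rcases z.2 with hz | hz
  · have hS1 := NonUnitalStarAlgebra.subset_adjoin ℂ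
      ({T1.adjoint * T2.adjoint, T2.adjoint} : Set (H →L[ℂ] H)) (mem_insert _ _)
    have hPz := firstReturn_mem_N2 hP hz
    refine ⟨T1.adjoint * T2.adjoint * star T2.adjoint, mul_mem hS1 (star_mem hS2), ?_, ?_⟩
    · simp only [ContinuousLinearMap.star_eq_adjoint, ContinuousLinearMap.adjoint_adjoint,
        mul_apply_eq_comp, hT2.1 _ hPz,
        hT2.adjoint_apply (injOn_firstReturn_N2 hP) hPz,
        hT1.adjoint_apply (injOn_firstReturn_N1 hP) hz]
    · simp only [star_mul, ContinuousLinearMap.star_eq_adjoint,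
        ContinuousLinearMap.adjoint_adjoint, mul_apply_eq_comp, hT1.1 _ hz,
        hT2.1 _ hPz, hT2.adjoint_apply (injOn_firstReturn_N2 hP) hPz]
  · refine ⟨T2.adjoint, hS2, hT2.adjoint_apply (injOn_firstReturn_N2 hP) hz, ?_⟩
    rw [ContinuousLinearMap.star_eq_adjoint, ContinuousLinearMap.adjoint_adjoint, hT2.1 _ hz]

lemma exists_mem_adjoin_apply_iterate_firstReturn (m : ↥(N1 ∪ N2)) (a : ℕ) :
    ∃ C ∈ NonUnitalStarAlgebra.adjoin ℂ {T1.adjoint * T2.adjoint, T2.adjoint},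
      C (b (P^[a] m)) = b m := by
  induction a with
  | zero =>
    obtain ⟨B, hB, hBP, hBstar⟩ := exists_mem_adjoin_apply_firstReturn hP hT1 hT2 m
    exact ⟨B * star B, mul_mem hB (star_mem hB), by
      rw [mul_apply_eq_comp, iterate_zero_apply, hBstar, hBP]⟩
  | succ a ih =>
    obtain ⟨C, hC, hCa⟩ := ih
    obtain ⟨B, hB, hBP, -⟩ := exists_mem_adjoin_apply_firstReturn hP hT1 hT2 (P^[a] m)
    exact ⟨C * B, mul_mem hC hB, by rw [mul_apply_eq_comp, iterate_succ_apply', hBP, hCa]⟩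

lemma closure_image_apply_cstarGen_eq_univ (h : ∀ m : ℕ+, 1 ∈ orbit collatz m) :
    closure ((fun A => A (b ⟨1, one_mem_N1_union_N2⟩)) ''
      CstarGen {T1.adjoint * T2.adjoint, T2.adjoint}) = univ := by
  let M : Submodule ℂ H := Submodule.map
    (ContinuousLinearMap.apply ℂ H (b ⟨1, one_mem_N1_union_N2⟩) : (H →L[ℂ] H) →ₗ[ℂ] H)
    (NonUnitalStarAlgebra.adjoin ℂ
      {T1.adjoint * T2.adjoint, T2.adjoint}).toNonUnitalSubalgebra.toSubmodule
  have hrange : range b ⊆ M := by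
    rintro _ ⟨m, rfl⟩
    obtain ⟨k, hk⟩ := h m
    replace hk : collatz^[k] m = 1 := hk
    obtain ⟨a, ha⟩ := exists_coe_iterate_eq_of_isFirstReturn hP m (hk ▸ one_mem_N1_union_N2)
    obtain ⟨C, hC, hCm⟩ := exists_mem_adjoin_apply_iterate_firstReturn hP hT1 hT2 m a
    have hPa : P^[a] m = ⟨1, one_mem_N1_union_N2⟩ := Subtype.ext (ha.trans hk)
    exact ⟨C, hC, hPa ▸ hCm⟩
  have hM : (M : Set H) ⊆ (fun A => A (b ⟨1, one_mem_N1_union_N2⟩)) ''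
      CstarGen {T1.adjoint * T2.adjoint, T2.adjoint} := by
    rintro _ ⟨A, hA, rfl⟩
    exact ⟨A, subset_closure hA, rfl⟩
  exact ((b.dense_of_range_subset hrange).mono hM).closure_eq

lemma orbEquiv_of_closure_image_apply_cstarGen_eq_univ {n : ↥(N1 ∪ N2)}
    (hn : closure ((fun A => A (b n)) '' CstarGen {T1.adjoint * T2.adjoint, T2.adjoint}) = univ)
    (z : ↥(N1 ∪ N2)) : orbEquiv P z n := by
  set R := {i | orbEquiv P i n}
  set K := (Submodule.span ℂ (b '' R)).topologicalClosure
  have hfwd : ∀ i ∈ R, P i ∈ R := fun _ hi => orbEquiv_apply_left_iff.2 hi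
  have hback : ∀ i, P i ∈ R → i ∈ R := fun _ hi => orbEquiv_apply_left_iff.1 hi
  have hT1K := hT1.mapsTo fun i hi _ => hfwd i hi
  have hT2K := hT2.mapsTo fun i hi _ => hfwd i hi
  have hT1K' := hT1.adjoint_mapsTo (injOn_firstReturn_N1 hP) fun i _ => hback i
  have hT2K' := hT2.adjoint_mapsTo (injOn_firstReturn_N2 hP) fun i _ => hback i
  have hgen : ∀ A ∈ ({T1.adjoint * T2.adjoint, T2.adjoint} : Set (H →L[ℂ] H)),
      MapsTo A K K ∧ MapsTo ⇑(star A) K K := by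
    rintro A (rfl | rfl)
    · simp only [star_mul, ContinuousLinearMap.star_eq_adjoint,
        ContinuousLinearMap.adjoint_adjoint]
      exact ⟨hT1K'.comp hT2K', hT2K.comp hT1K⟩
    · rw [ContinuousLinearMap.star_eq_adjoint, ContinuousLinearMap.adjoint_adjoint]
      exact ⟨hT2K', hT2K⟩
  have hK : ∀ A ∈ CstarGen {T1.adjoint * T2.adjoint, T2.adjoint}, A (b n) ∈ K := fun A hA =>
    mapsTo_of_mem_cstarGen (Submodule.isClosed_topologicalClosure _) hgen hA
      (Submodule.le_topologicalClosure _ (Submodule.subset_span ⟨n, orbEquiv_refl P n, rfl⟩))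
  refine b.mem_of_mem_topologicalClosure_span (R := R) ?_
  exact closure_minimal (image_subset_iff.2 hK) (Submodule.isClosed_topologicalClosure _)
    (hn ▸ mem_univ (b z))

end Operators

/-- Some basis vector `eₙ` is cyclic for `C*(S₁,S₂)` iff the Collatz conjecture holds. -/
theorem cyclic_cuntz_iff_collatz {H : Type*} [NormedAddCommGroup H] [InnerProductSpace ℂ H]
    [CompleteSpace H] (b : HilbertBasis ↥(N1 ∪ N2) ℂ H)
    (P : ↥(N1 ∪ N2) → ↥(N1 ∪ N2))
    (hP : ∀ x : ↥(N1 ∪ N2), IsFirstReturn collatz (N1 ∪ N2) ↑x ↑(P x))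
    (T1 T2 : H →L[ℂ] H)
    (hT1 : ∀ x : ↥(N1 ∪ N2), ((x : ℕ+) ∈ N1 → T1 (b x) = b (P x)) ∧
      ((x : ℕ+) ∈ N2 → T1 (b x) = 0))
    (hT2 : ∀ x : ↥(N1 ∪ N2), ((x : ℕ+) ∈ N2 → T2 (b x) = b (P x)) ∧
      ((x : ℕ+) ∈ N1 → T2 (b x) = 0))
    (S1 S2 : H →L[ℂ] H)
    (hS1 : S1 = ContinuousLinearMap.adjoint T1 * ContinuousLinearMap.adjoint T2)
    (hS2 : S2 = ContinuousLinearMap.adjoint T2) :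
    (∃ n : ↥(N1 ∪ N2), closure ((fun A => A (b n)) '' CstarGen {S1, S2}) = Set.univ) ↔
      ∀ m : ℕ+, (1 : ℕ+) ∈ orbit collatz m := by
  have hT1 := isPartialShift_N1 hT1
  have hT2 := isPartialShift_N2 hT2
  subst hS1 hS2
  constructor
  · rintro ⟨n, hn⟩ m
    obtain ⟨k, hk⟩ := exists_iterate_collatz_mem_N1 m
    have hm := orbEquiv_of_closure_image_apply_cstarGen_eq_univ hP hT1 hT2 hn ⟨_, Or.inl hk⟩
    have hone := orbEquiv_of_closure_image_apply_cstarGen_eq_univ hP hT1 hT2 hn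
      ⟨1, one_mem_N1_union_N2⟩
    exact orbit_trans (iterate_mem_orbit collatz m k)
      (one_mem_orbit_of_orbEquiv_one hP (hm.trans hone.symm))
  · exact fun h => ⟨_, closure_image_apply_cstarGen_eq_univ hP hT1 hT2 h⟩
end
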